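/- Multi-agent version, welfare maximum implies equilibrium price exists: let there be J sellers with outputs g j : Fin K → ℝ and risk parameters λ j ∈ [0,1], and I buyers with loads d i : Fin K → ℝ and risk parameters μ i ∈ [0,1]. Suppose nonnegative quantities (q_s⁰ : Fin J → ℝ, q_b⁰ : Fin I → ℝ) with ∑_{i} q_b⁰ i = ∑_{j} q_s⁰ j maximize the total welfare ∑_{j} ρ_{λ j}(fun k => (g j k − q_s j)·π k) + ∑_{i} ρ_{μ i}(fun k => (q_b i − d i k)·π k) over all q_s ≥ 0, q_b ≥ 0 with ∑_{i} q_b i = ∑_{j} q_s j. Then there exists a single price p⁰ ∈ ℝ (the multiplier of the market-clearing constraint) such that each q_s⁰ j maximizes ρ_{λ j}(fun k => (g j k − q)·π k) + q·p⁰ over q ≥ 0 and each q_b⁰ i maximizes ρ_{μ i}(fun k => (q − d i k)·π k) − q·p⁰ over q ≥ 0. -/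

import Mathlib

/-!
Encode a seller supplying `q` as an agent with net demand `-q`; welfare is then a sum of concave
functions `φ a` of the net demands `y a`, maximised at `y₀` subject to `∑ a, y a = 0`. Moving a
small amount `δ` from one agent to another cannot raise welfare, and since chord slopes of a
concave function through a fixed point are antitone, every chord slope of any agent to the right
of its optimum is at most every chord slope of any agent to the left of its optimum. A price `p`
separating the two sets of slopes makes each `y₀ a` maximise `φ a y - y * p` on its own.
Concavity of `riskAdj` comes from `CVaR` being a supremum over `a` of functions that are jointly
concave in `(x, a)`.
-/

open Finset

/-- Rockafellar–Uryasev representation of the (lower-tail) conditional value-at-risk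
for `K` equally likely scenarios. -/
noncomputable def CVaR (K : ℕ) (α : ℝ) (x : Fin K → ℝ) : ℝ :=
  sSup {v : ℝ | ∃ a : ℝ, v = a + (1 / (K * (1 - α))) * ∑ k, min (x k - a) 0}

/-- Risk-adjusted expected value: convex combination of expectation and CVaR. -/
noncomputable def riskAdj (K : ℕ) (α lam : ℝ) (x : Fin K → ℝ) : ℝ :=
  lam * ((1 / K) * ∑ k, x k) + (1 - lam) * CVaR K α x

open Set

theorem exists_mem_upperBounds_inter_lowerBounds {α : Type*} [ConditionallyCompleteLinearOrder α]
    {L U : Set α} (hL : BddAbove L) (hU : BddBelow U) (hLU : ∀ l ∈ L, ∀ u ∈ U, l ≤ u) :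
    (upperBounds L ∩ lowerBounds U).Nonempty := by
  obtain ⟨b, hb⟩ := hU
  refine ⟨sSup (insert b L), fun l hl => le_csSup (hL.insert b) (mem_insert_of_mem _ hl),
    fun u hu => csSup_le (insert_nonempty _ _) ?_⟩
  rintro l (rfl | hl)
  exacts [hb hu, hLU l hl u hu]

theorem ConcaveOn.comp_add_smul {E : Type*} [AddCommGroup E] [Module ℝ E] {f : E → ℝ}
    (hf : ConcaveOn ℝ univ f) (x v : E) : ConcaveOn ℝ univ (fun t : ℝ => f (x + t • v)) := by
  simpa [Function.comp_def, AffineMap.lineMap_apply_module', add_comm x]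
    using hf.comp_affineMap (AffineMap.lineMap x (x + v))

section Slope

variable {f : ℝ → ℝ} {D : Set ℝ} {x y z p : ℝ}

theorem ConcaveOn.slope_le_slope (hf : ConcaveOn ℝ univ f) (hy : y ≠ x) (hz : z ≠ x)
    (hyz : y ≤ z) : slope f x z ≤ slope f x y :=
  hf.slope_anti (mem_univ x) ⟨mem_univ y, hy⟩ ⟨mem_univ z, hz⟩ hyz

theorem ConcaveOn.bddAbove_slope_gt (hf : ConcaveOn ℝ univ f) (x : ℝ) (D : Set ℝ) :
    BddAbove (slope f x '' {y ∈ D | x < y}) :=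
  ⟨slope f x (x - 1), by
    rintro _ ⟨y, ⟨-, hy⟩, rfl⟩
    exact hf.slope_le_slope (by linarith) hy.ne' (by linarith)⟩

theorem ConcaveOn.bddBelow_slope_lt (hf : ConcaveOn ℝ univ f) (x : ℝ) (D : Set ℝ) :
    BddBelow (slope f x '' {y ∈ D | y < x}) :=
  ⟨slope f x (x + 1), by
    rintro _ ⟨y, ⟨-, hy⟩, rfl⟩
    exact hf.slope_le_slope hy.ne (by linarith) (by linarith)⟩

theorem isMaxOn_sub_mul_of_slope (hgt : ∀ y ∈ D, x < y → slope f x y ≤ p)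
    (hlt : ∀ y ∈ D, y < x → p ≤ slope f x y) : IsMaxOn (fun y => f y - y * p) D x := by
  refine isMaxOn_iff.2 fun y hy => ?_
  rcases lt_trichotomy y x with h | rfl | h
  · have := hlt y hy h
    rw [slope_def_field, le_div_iff_of_neg (by linarith)] at this
    linarith
  · exact le_rfl
  · have := hgt y hy h
    rw [slope_def_field, div_le_iff₀ (by linarith)] at this
    linarith

end Slope

section Allocation

variable {ι : Type*} [Fintype ι] {φ : ι → ℝ → ℝ} {D : ι → Set ℝ} {y₀ : ι → ℝ}

def allocations (D : ι → Set ℝ) (total : ℝ) : Set (ι → ℝ) :=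
  {y | (∀ a, y a ∈ D a) ∧ ∑ a, y a = total}

theorem transfer_le_of_isMaxOn_sum (hy₀ : ∀ a, y₀ a ∈ D a)
    (hmax : IsMaxOn (fun y => ∑ a, φ a (y a)) (allocations D (∑ a, y₀ a)) y₀)
    {a b : ι} (hab : a ≠ b) {δ : ℝ} (ha : y₀ a + δ ∈ D a) (hb : y₀ b - δ ∈ D b) :
    φ a (y₀ a + δ) + φ b (y₀ b - δ) ≤ φ a (y₀ a) + φ b (y₀ b) := by
  classical
  set y := Function.update (Function.update y₀ a (y₀ a + δ)) b (y₀ b - δ)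
  have hya : y a = y₀ a + δ := by simp [y, hab]
  have hyb : y b = y₀ b - δ := by simp [y]
  have hyc : ∀ c, c ≠ a ∧ c ≠ b → y c = y₀ c := fun c hc => by simp [y, hc.1, hc.2]
  have hmem : ∀ c, y c ∈ D c := by
    intro c
    by_cases hca : c = a
    · subst hca; rwa [hya]
    by_cases hcb : c = b
    · subst hcb; rwa [hyb]
    rw [hyc c ⟨hca, hcb⟩]
    exact hy₀ c
  have hsum : ∑ c, (y c - y₀ c) = (y a - y₀ a) + (y b - y₀ b) :=
    Fintype.sum_eq_add a b hab fun c hc => by rw [hyc c hc, sub_self]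
  have hwelfare : ∑ c, (φ c (y c) - φ c (y₀ c))
      = (φ a (y a) - φ a (y₀ a)) + (φ b (y b) - φ b (y₀ b)) :=
    Fintype.sum_eq_add a b hab fun c hc => by rw [hyc c hc, sub_self]
  rw [Finset.sum_sub_distrib] at hsum hwelfare
  have := isMaxOn_iff.1 hmax y ⟨hmem, by rw [hya, hyb] at hsum; linarith⟩
  rw [hya, hyb] at hwelfare
  linarith

theorem slope_le_slope_of_isMaxOn_sum (hφ : ∀ a, ConcaveOn ℝ univ (φ a))
    (hD : ∀ a, (D a).OrdConnected) (hy₀ : ∀ a, y₀ a ∈ D a)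
    (hmax : IsMaxOn (fun y => ∑ a, φ a (y a)) (allocations D (∑ a, y₀ a)) y₀)
    {a b : ι} {y y' : ℝ} (hy : y ∈ D a) (hgt : y₀ a < y) (hy' : y' ∈ D b) (hlt : y' < y₀ b) :
    slope (φ a) (y₀ a) y ≤ slope (φ b) (y₀ b) y' := by
  by_cases hab : a = b
  · subst hab
    exact (hφ a).slope_le_slope hlt.ne hgt.ne' (by linarith)
  set δ := min (y - y₀ a) (y₀ b - y')
  have hδ : 0 < δ := lt_min (by linarith) (by linarith)
  have hδa : δ ≤ y - y₀ a := min_le_left _ _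
  have hδb : δ ≤ y₀ b - y' := min_le_right _ _
  have htransfer := transfer_le_of_isMaxOn_sum hy₀ hmax hab
    ((hD a).out (hy₀ a) hy ⟨by linarith, by linarith⟩)
    ((hD b).out hy' (hy₀ b) ⟨by linarith, by linarith⟩)
  calc slope (φ a) (y₀ a) y ≤ slope (φ a) (y₀ a) (y₀ a + δ) :=
        (hφ a).slope_le_slope (by linarith) hgt.ne' (by linarith)
    _ ≤ slope (φ b) (y₀ b) (y₀ b - δ) := by
        rw [slope_def_field, slope_def_field, add_sub_cancel_left, sub_sub_cancel_left, div_neg,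
          le_neg, ← neg_div, div_le_div_iff_of_pos_right hδ]
        linarith
    _ ≤ slope (φ b) (y₀ b) y' := (hφ b).slope_le_slope hlt.ne (by linarith) (by linarith)

theorem exists_price_isMaxOn_of_isMaxOn_sum (hφ : ∀ a, ConcaveOn ℝ univ (φ a))
    (hD : ∀ a, (D a).OrdConnected) (hy₀ : ∀ a, y₀ a ∈ D a)
    (hmax : IsMaxOn (fun y => ∑ a, φ a (y a)) (allocations D (∑ a, y₀ a)) y₀) :
    ∃ p, ∀ a, IsMaxOn (fun y => φ a y - y * p) (D a) (y₀ a) := by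
  set L := ⋃ a, slope (φ a) (y₀ a) '' {y ∈ D a | y₀ a < y}
  set U := ⋃ a, slope (φ a) (y₀ a) '' {y ∈ D a | y < y₀ a}
  have hL : BddAbove L := by
    simpa using finite_univ.bddAbove_biUnion.2 fun a _ => (hφ a).bddAbove_slope_gt (y₀ a) (D a)
  have hU : BddBelow U := by
    simpa using finite_univ.bddBelow_biUnion.2 fun a _ => (hφ a).bddBelow_slope_lt (y₀ a) (D a)
  have hLU : ∀ l ∈ L, ∀ u ∈ U, l ≤ u := by
    simp only [L, U, mem_iUnion]
    rintro _ ⟨a, y, ⟨hy, hgt⟩, rfl⟩ _ ⟨b, y', ⟨hy', hlt⟩, rfl⟩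
    exact slope_le_slope_of_isMaxOn_sum hφ hD hy₀ hmax hy hgt hy' hlt
  obtain ⟨p, hpL, hpU⟩ := exists_mem_upperBounds_inter_lowerBounds hL hU hLU
  exact ⟨p, fun a => isMaxOn_sub_mul_of_slope
    (fun y hy hgt => hpL (mem_iUnion.2 ⟨a, y, ⟨hy, hgt⟩, rfl⟩))
    (fun y hy hlt => hpU (mem_iUnion.2 ⟨a, y, ⟨hy, hlt⟩, rfl⟩))⟩

end Allocation

theorem Real.mul_iSup_add_mul_iSup_le {ι κ : Sort*} [Nonempty ι] [Nonempty κ] {f : ι → ℝ}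
    {g : κ → ℝ} {t s c : ℝ} (ht : 0 ≤ t) (hs : 0 ≤ s) (h : ∀ i j, t * f i + s * g j ≤ c) :
    t * (⨆ i, f i) + s * (⨆ j, g j) ≤ c := by
  rw [Real.mul_iSup_of_nonneg ht, Real.mul_iSup_of_nonneg hs]
  have hg : ∀ i, ⨆ j, s * g j ≤ c - t * f i := fun i => ciSup_le fun j => by linarith [h i j]
  have hf : ⨆ i, t * f i ≤ c - ⨆ j, s * g j := ciSup_le fun i => by linarith [hg i]
  linarith

theorem mul_min_zero_add_mul_min_zero_le {t s u v : ℝ} (ht : 0 ≤ t) (hs : 0 ≤ s) :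
    t * min u 0 + s * min v 0 ≤ min (t * u + s * v) 0 :=
  le_min (by nlinarith [min_le_left u 0, min_le_left v 0])
    (by nlinarith [min_le_right u 0, min_le_right v 0])

section CVaR

variable {K : ℕ} {α : ℝ}

noncomputable def cvarObjective (K : ℕ) (α : ℝ) (x : Fin K → ℝ) (a : ℝ) : ℝ :=
  a + (1 / (K * (1 - α))) * ∑ k, min (x k - a) 0

theorem CVaR_eq_iSup (x : Fin K → ℝ) : CVaR K α x = ⨆ a, cvarObjective K α x a := by
  rw [CVaR, iSup]
  congr 1
  ext v
  exact exists_congr fun a => eq_comm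

theorem cvarObjective_le_sum_abs (hK : 1 ≤ K) (hα0 : 0 ≤ α) (hα1 : α < 1) (x : Fin K → ℝ)
    (a : ℝ) : cvarObjective K α x a ≤ ∑ k, |x k| := by
  set M := ∑ k, |x k|
  have hKpos : (0 : ℝ) < K := by exact_mod_cast hK
  have h1α : 0 < 1 - α := by linarith
  have hc : 0 < 1 / (K * (1 - α)) := by positivity
  have hcK : 1 ≤ 1 / (K * (1 - α)) * K := by
    rw [div_mul_eq_mul_div, one_mul, le_div_iff₀ (by nlinarith)]
    nlinarith
  have hm : min (M - a) 0 ≤ 0 := min_le_right _ _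
  have hsum : ∑ k, min (x k - a) 0 ≤ K * min (M - a) 0 := by
    calc ∑ k, min (x k - a) 0 ≤ ∑ _k : Fin K, min (M - a) 0 :=
          sum_le_sum fun k _ => min_le_min_right 0 (by
            linarith [le_abs_self (x k), single_le_sum (fun k _ => abs_nonneg (x k)) (mem_univ k)])
      _ = K * min (M - a) 0 := by simp
  calc cvarObjective K α x a ≤ a + 1 / (K * (1 - α)) * (K * min (M - a) 0) :=
        by unfold cvarObjective; nlinarith [mul_le_mul_of_nonneg_left hsum hc.le]
    _ ≤ a + min (M - a) 0 := by nlinarith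
    _ ≤ M := by linarith [min_le_left (M - a) 0]

theorem mul_cvarObjective_add_mul_le (hα1 : α ≤ 1) {x₁ x₂ : Fin K → ℝ} {a₁ a₂ t s : ℝ}
    (ht : 0 ≤ t) (hs : 0 ≤ s) :
    t * cvarObjective K α x₁ a₁ + s * cvarObjective K α x₂ a₂ ≤
      cvarObjective K α (t • x₁ + s • x₂) (t * a₁ + s * a₂) := by
  have hc : 0 ≤ 1 / (K * (1 - α)) := by
    have := sub_nonneg.2 hα1
    positivity
  have hmin : t * ∑ k, min (x₁ k - a₁) 0 + s * ∑ k, min (x₂ k - a₂) 0 ≤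
      ∑ k, min ((t • x₁ + s • x₂) k - (t * a₁ + s * a₂)) 0 := by
    rw [mul_sum, mul_sum, ← sum_add_distrib]
    refine sum_le_sum fun k _ => ?_
    refine (mul_min_zero_add_mul_min_zero_le ht hs).trans_eq (congrArg (min · 0) ?_)
    simp only [Pi.add_apply, Pi.smul_apply, smul_eq_mul]
    ring
  unfold cvarObjective
  nlinarith [mul_le_mul_of_nonneg_left hmin hc]

theorem concaveOn_CVaR (hK : 1 ≤ K) (hα0 : 0 ≤ α) (hα1 : α < 1) :
    ConcaveOn ℝ univ (CVaR K α) := by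
  refine ⟨convex_univ, fun x₁ _ x₂ _ t s ht hs _ => ?_⟩
  simp only [CVaR_eq_iSup, smul_eq_mul]
  refine Real.mul_iSup_add_mul_iSup_le ht hs fun a₁ a₂ => ?_
  refine (mul_cvarObjective_add_mul_le hα1.le ht hs).trans (le_ciSup ?_ _)
  exact ⟨_, forall_mem_range.2 (cvarObjective_le_sum_abs hK hα0 hα1 _)⟩

theorem concaveOn_riskAdj (hK : 1 ≤ K) (hα0 : 0 ≤ α) (hα1 : α < 1) {lam : ℝ} (hlam : lam ≤ 1) :
    ConcaveOn ℝ univ (riskAdj K α lam) := by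
  have hmean : ConcaveOn ℝ univ fun x : Fin K → ℝ => lam * ((1 / K) * ∑ k, x k) :=
    ⟨convex_univ, fun x _ y _ t s _ _ _ => le_of_eq <| by
      simp only [Pi.add_apply, Pi.smul_apply, smul_eq_mul, sum_add_distrib, ← mul_sum]; ring⟩
  exact hmean.add ((concaveOn_CVaR hK hα0 hα1).smul (sub_nonneg.2 hlam))

theorem concaveOn_riskAdj_add_mul (hK : 1 ≤ K) (hα0 : 0 ≤ α) (hα1 : α < 1) {lam : ℝ}
    (hlam : lam ≤ 1) (c π : Fin K → ℝ) :
    ConcaveOn ℝ univ fun y => riskAdj K α lam (fun k => (c k + y) * π k) := by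
  refine ((concaveOn_riskAdj hK hα0 hα1 hlam).comp_add_smul (fun k => c k * π k) π).congr
    fun y _ => congrArg (riskAdj K α lam) (funext fun k => ?_)
  simp only [Pi.add_apply, Pi.smul_apply, smul_eq_mul]
  ring

end CVaR

/-- Multi-agent version, welfare maximum implies equilibrium: if a nonnegative,
market-clearing quantity profile maximizes total welfare, there exists a single price `p⁰`
(the multiplier of the market-clearing constraint) at which every seller's and every
buyer's quantity is individually optimal. -/
theorem multiagent_welfare_maximum_yields_equilibrium_price (K J I : ℕ) (hK : 1 ≤ K)
    (α : ℝ) (hα0 : 0 ≤ α) (hα1 : α < 1)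
    (lam : Fin J → ℝ) (hlam : ∀ j, 0 ≤ lam j ∧ lam j ≤ 1)
    (mu : Fin I → ℝ) (hmu : ∀ i, 0 ≤ mu i ∧ mu i ≤ 1)
    (g : Fin J → Fin K → ℝ) (d : Fin I → Fin K → ℝ) (π : Fin K → ℝ)
    (qs₀ : Fin J → ℝ) (qb₀ : Fin I → ℝ)
    (hqs₀ : ∀ j, 0 ≤ qs₀ j) (hqb₀ : ∀ i, 0 ≤ qb₀ i)
    (hclear : ∑ i, qb₀ i = ∑ j, qs₀ j)
    (hwelf : ∀ (qs : Fin J → ℝ) (qb : Fin I → ℝ),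
      (∀ j, 0 ≤ qs j) → (∀ i, 0 ≤ qb i) → (∑ i, qb i = ∑ j, qs j) →
      (∑ j, riskAdj K α (lam j) (fun k => (g j k - qs j) * π k)) +
          (∑ i, riskAdj K α (mu i) (fun k => (qb i - d i k) * π k)) ≤
        (∑ j, riskAdj K α (lam j) (fun k => (g j k - qs₀ j) * π k)) +
          (∑ i, riskAdj K α (mu i) (fun k => (qb₀ i - d i k) * π k))) :
    ∃ p₀ : ℝ,
      (∀ j, ∀ q : ℝ, 0 ≤ q →
        riskAdj K α (lam j) (fun k => (g j k - q) * π k) + q * p₀ ≤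
          riskAdj K α (lam j) (fun k => (g j k - qs₀ j) * π k) + qs₀ j * p₀) ∧
      (∀ i, ∀ q : ℝ, 0 ≤ q →
        riskAdj K α (mu i) (fun k => (q - d i k) * π k) - q * p₀ ≤
          riskAdj K α (mu i) (fun k => (qb₀ i - d i k) * π k) - qb₀ i * p₀) := by
  let w : Fin J ⊕ Fin I → ℝ := Sum.elim lam mu
  let c : Fin J ⊕ Fin I → Fin K → ℝ := Sum.elim g fun i k => -d i k
  let φ a y := riskAdj K α (w a) (fun k => (c a k + y) * π k)
  let D : Fin J ⊕ Fin I → Set ℝ := Sum.elim (fun _ => Iic 0) (fun _ => Ici 0)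
  let y₀ : Fin J ⊕ Fin I → ℝ := Sum.elim (fun j => -qs₀ j) qb₀
  have hφ : ∀ a, ConcaveOn ℝ univ (φ a) := fun a =>
    concaveOn_riskAdj_add_mul hK hα0 hα1 (by rcases a with j | i; exacts [(hlam j).2, (hmu i).2])
      (c a) π
  have hD : ∀ a, (D a).OrdConnected := by
    rintro (j | i); exacts [ordConnected_Iic, ordConnected_Ici]
  have hy₀ : ∀ a, y₀ a ∈ D a := by
    rintro (j | i)
    · simpa [y₀, D] using hqs₀ j
    · simpa [y₀, D] using hqb₀ i
  have hmax : IsMaxOn (fun y => ∑ a, φ a (y a)) (allocations D (∑ a, y₀ a)) y₀ := by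
    rintro y ⟨hyD, hysum⟩
    simp only [Fintype.sum_sum_type, y₀, Sum.elim_inl, Sum.elim_inr, sum_neg_distrib] at hysum
    have := hwelf (fun j => -y (.inl j)) (fun i => y (.inr i))
      (fun j => by simpa [D] using hyD (.inl j)) (fun i => by simpa [D] using hyD (.inr i))
      (by rw [sum_neg_distrib]; linarith)
    simpa [Fintype.sum_sum_type, φ, w, c, y₀, ← sub_eq_add_neg, neg_add_eq_sub] using this
  obtain ⟨p, hp⟩ := exists_price_isMaxOn_of_isMaxOn_sum hφ hD hy₀ hmax
  refine ⟨p, fun j q hq => ?_, fun i q hq => ?_⟩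
  · simpa [φ, w, c, y₀, ← sub_eq_add_neg] using
      isMaxOn_iff.1 (hp (.inl j)) (-q) (by simpa [D] using hq)
  · simpa [φ, w, c, y₀, neg_add_eq_sub] using
      isMaxOn_iff.1 (hp (.inr i)) q (by simpa [D] using hq)
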